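/- (Karush–Kuhn–Tucker form.) Under the hypotheses of the John-type theorem, if additionally there exists w ∈ E such that D^-_M f_i(x̂)(w) > 0 for every i ∈ {1,…,m} with f_i(x̂) = 0 (Slater-type condition), then the multipliers can be chosen with λ^0 = 1: there exist λ^1,…,λ^m ≥ 0 with λ^i f_i(x̂) = 0 and D^-_M f_0(x̂)(u) + Σ_{i=1}^m λ^i D^-_M f_i(x̂)(u) ≤ 0 for all u ∈ E. -/

import Mathlib

/-!
At `xh` no direction `v` can have `D⁻_M f_i(xh)(v) > 0` simultaneously for the objective and all
active constraints: moving a little along `v` keeps the active constraints nonnegative, the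
inactive ones stay positive by lower semicontinuity, and the objective strictly increases.
Each `D⁻_M f_i(xh)` is superadditive and positively homogeneous, hence concave, so the
Fan–Glicksberg–Hoffman alternative gives nonnegative, not all zero multipliers for the objective
and the active constraints with `∑ μ_i D⁻_M f_i(xh) ≤ 0`. Evaluating at the Slater direction
forces the objective's multiplier to be positive; after normalizing it to `1`, inactive
constraints receive multiplier `0`.
-/

open Filter Topology

variable {E : Type*} [NormedAddCommGroup E] [NormedSpace ℝ E]

/-- Difference quotient of `f` at `x` in direction `u`. -/
noncomputable def diniQuot (f : E → ℝ) (x u : E) : ℝ → ℝ :=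
  fun t => (f (x + t • u) - f x) / t

/-- Lower Dini derivative `D⁻ f(x)(u)`. -/
noncomputable def lowerDini (f : E → ℝ) (x u : E) : ℝ :=
  liminf (diniQuot f x u) (𝓝[>] 0)

/-- Upper Dini derivative `D⁺ f(x)(u)`. -/
noncomputable def upperDini (f : E → ℝ) (x u : E) : ℝ :=
  limsup (diniQuot f x u) (𝓝[>] 0)

/-- Modified lower Dini derivative `D⁻_M f(x)(u)`. -/
noncomputable def lowerDiniM (f : E → ℝ) (x u : E) : ℝ :=
  ⨅ w : E, (lowerDini f x (u + w) - lowerDini f x w)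

/-- Modified upper Dini derivative `D⁺_M f(x)(u)`. -/
noncomputable def upperDiniM (f : E → ℝ) (x u : E) : ℝ :=
  ⨆ w : E, (upperDini f x (u + w) - upperDini f x w)

/-- The difference quotients of `f` at `x` in direction `u` are bounded near `0⁺`,
so that the lower/upper Dini derivatives are genuine (finite) values. -/
def DiniFinite (f : E → ℝ) (x u : E) : Prop :=
  IsBoundedUnder (· ≤ ·) (𝓝[>] (0:ℝ)) (diniQuot f x u) ∧
  IsBoundedUnder (· ≥ ·) (𝓝[>] (0:ℝ)) (diniQuot f x u)

/-- Finiteness of the modified lower Dini derivative. -/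
def LowerDiniMFinite (f : E → ℝ) (x u : E) : Prop :=
  BddBelow (Set.range fun w : E => lowerDini f x (u + w) - lowerDini f x w)

/-- Finiteness of the modified upper Dini derivative. -/
def UpperDiniMFinite (f : E → ℝ) (x u : E) : Prop :=
  BddAbove (Set.range fun w : E => upperDini f x (u + w) - upperDini f x w)

lemma nonpos_of_forall_pos_mul_lt {a b : ℝ} (h : ∀ t > 0, t * a < b) : a ≤ 0 := by
  by_contra! ha
  have := h ((|b| + 1) / a) (by positivity)
  rw [div_mul_cancel₀ _ ha.ne'] at this
  linarith [le_abs_self b]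

lemma nonneg_of_forall_pos_mul_lt {a b : ℝ} (h : ∀ t > 0, t * a < b) : 0 ≤ b := by
  by_contra! hb
  have ha : a < 0 := by linarith [h 1 one_pos]
  have := h (b / a) (div_pos_of_neg_of_neg hb ha)
  rw [div_mul_cancel₀ _ ha.ne] at this
  exact lt_irrefl _ this

section Alternative

variable {ι V : Type*} [Fintype ι] [AddCommGroup V] [Module ℝ V]

lemma LinearMap.apply_eq_sum_mul_single [DecidableEq ι] (F : (ι → ℝ) →ₗ[ℝ] ℝ)
    (y : ι → ℝ) : F y = ∑ i, y i * F (Pi.single i 1) := by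
  conv_lhs => rw [← Finset.univ_sum_single y]
  simp only [map_sum]
  refine Finset.sum_congr rfl fun i _ => ?_
  rw [← smul_eq_mul, ← map_smul, ← Pi.single_smul', smul_eq_mul, mul_one]

/-- The Fan–Glicksberg–Hoffman alternative. The positive orthant of `ℝ^ι` is separated from the
convex set `{y | ∃ v, y ≤ φ v}`, and minus the separating functional gives the multipliers. -/
theorem exists_nonneg_ne_zero_sum_mul_nonpos_of_concaveOn {φ : ι → V → ℝ}
    (hφ : ∀ i, ConcaveOn ℝ Set.univ (φ i)) (h : ¬ ∃ v, ∀ i, 0 < φ i v) :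
    ∃ μ : ι → ℝ, (∀ i, 0 ≤ μ i) ∧ μ ≠ 0 ∧ ∀ v, ∑ i, μ i * φ i v ≤ 0 := by
  classical
  set O : Set (ι → ℝ) := Set.univ.pi fun _ => Set.Ioi 0
  set C : Set (ι → ℝ) := {y | ∃ v, ∀ i, y i ≤ φ i v}
  have hO_open : IsOpen O := isOpen_set_pi Set.finite_univ fun _ _ => isOpen_Ioi
  have hO_conv : Convex ℝ O := convex_pi fun _ _ => convex_Ioi 0
  have hC_conv : Convex ℝ C := by
    rintro y ⟨vy, hy⟩ z ⟨vz, hz⟩ a b ha hb hab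
    refine ⟨a • vy + b • vz, fun i => ?_⟩
    calc a * y i + b * z i ≤ a * φ i vy + b * φ i vz := by
          gcongr
          exacts [hy i, hz i]
      _ ≤ φ i (a • vy + b • vz) := (hφ i).2 trivial trivial ha hb hab
  have hdisj : Disjoint O C := Set.disjoint_left.2 fun y hyO ⟨v, hv⟩ =>
    h ⟨v, fun i => (hyO i trivial).trans_le (hv i)⟩
  obtain ⟨F, s, hFO, hFC⟩ := geometric_hahn_banach_open hO_conv hO_open hC_conv hdisj
  have hF : ∀ y, F y = ∑ i, y i * F (Pi.single i 1) :=
    (F : (ι → ℝ) →ₗ[ℝ] ℝ).apply_eq_sum_mul_single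
  have hmemO {y : ι → ℝ} (hy : ∀ i, 0 < y i) : y ∈ O := fun i _ => hy i
  have hs : 0 ≤ s := nonneg_of_forall_pos_mul_lt (a := F 1) fun t ht => by
    simpa using hFO (t • 1) (hmemO fun _ => by simpa using ht)
  refine ⟨fun i => -F (Pi.single i 1), fun i => ?_, fun hμ => ?_, fun v => ?_⟩
  · have : F (Pi.single i 1) ≤ 0 := nonpos_of_forall_pos_mul_lt (b := s - F 1) fun t ht => by
      have hmem : t • Pi.single i 1 + 1 ∈ O := hmemO fun j => by
        rcases eq_or_ne j i with rfl | hj <;> simp [*, add_pos]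
      have := hFO _ hmem
      rw [map_add, map_smul, smul_eq_mul] at this
      linarith
    linarith
  · have hFi : ∀ i, F (Pi.single i 1) = 0 := fun i => by simpa using congrFun hμ i
    have hF0 : ∀ y, F y = 0 := fun y => by simp [hF y, hFi]
    have h1 := hFO 1 (hmemO fun _ => one_pos)
    have h2 := hFC (fun i => φ i 0) ⟨0, fun _ => le_rfl⟩
    rw [hF0] at h1 h2
    linarith
  · have := hFC (fun i => φ i v) ⟨v, fun _ => le_rfl⟩
    rw [hF] at this
    simp only [neg_mul, Finset.sum_neg_distrib]
    linarith [Finset.sum_congr rfl fun i (_ : i ∈ Finset.univ) =>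
      mul_comm (φ i v) (F (Pi.single i 1))]

theorem exists_nonneg_sum_mul_nonpos_of_concaveOn_of_slater {φ : ι → V → ℝ} (j : ι)
    (hφ : ∀ i, ConcaveOn ℝ Set.univ (φ i)) (h : ¬ ∃ v, ∀ i, 0 < φ i v)
    (hslater : ∃ w, ∀ i, i ≠ j → 0 < φ i w) :
    ∃ μ : ι → ℝ, (∀ i, 0 ≤ μ i) ∧ μ j = 1 ∧ ∀ v, ∑ i, μ i * φ i v ≤ 0 := by
  obtain ⟨μ, hμ, hμne, hsum⟩ := exists_nonneg_ne_zero_sum_mul_nonpos_of_concaveOn hφ h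
  obtain ⟨w, hw⟩ := hslater
  have hμj : 0 < μ j := by
    refine (hμ j).lt_of_ne fun hj => hμne (funext fun i => ?_)
    have hterm : ∀ i ∈ Finset.univ, 0 ≤ μ i * φ i w := fun i _ => by
      rcases eq_or_ne i j with rfl | hi
      · simp [← hj]
      · exact mul_nonneg (hμ i) (hw i hi).le
    have hzero := (Finset.sum_eq_zero_iff_of_nonneg hterm).1
      ((hsum w).antisymm (Finset.sum_nonneg hterm)) i (Finset.mem_univ i)
    rcases eq_or_ne i j with rfl | hi
    · exact hj.symm
    · exact (mul_eq_zero.1 hzero).resolve_right (hw i hi).ne'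
  refine ⟨fun i => μ i / μ j, fun i => div_nonneg (hμ i) hμj.le, div_self hμj.ne', fun v => ?_⟩
  simp only [div_mul_eq_mul_div, ← Finset.sum_div]
  exact div_nonpos_of_nonpos_of_nonneg (hsum v) hμj.le

end Alternative

section Dini

variable {f : E → ℝ} {x : E}

lemma lowerDini_zero : lowerDini f x 0 = 0 := by
  have : diniQuot f x 0 = fun _ => 0 := by
    funext t
    simp [diniQuot]
  rw [lowerDini, this, liminf_const]

lemma lowerDiniM_zero : lowerDiniM f x 0 = 0 := by
  simp [lowerDiniM]

lemma lowerDiniM_le_lowerDini {u : E} (h : LowerDiniMFinite f x u) :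
    lowerDiniM f x u ≤ lowerDini f x u := by
  simpa [lowerDiniM, lowerDini_zero] using ciInf_le h 0

lemma lowerDiniM_add_le {u v : E} (hu : LowerDiniMFinite f x u)
    (hv : LowerDiniMFinite f x v) :
    lowerDiniM f x u + lowerDiniM f x v ≤ lowerDiniM f x (u + v) := by
  refine le_ciInf fun w => ?_
  have h1 : lowerDiniM f x u ≤ _ := ciInf_le hu (v + w)
  have h2 : lowerDiniM f x v ≤ _ := ciInf_le hv w
  rw [add_assoc u v w]
  linarith

lemma map_const_mul_nhdsGT_zero {t : ℝ} (ht : 0 < t) : map (t * ·) (𝓝[>] (0 : ℝ)) = 𝓝[>] 0 := by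
  conv_lhs => rw [← comap_mulLeft_nhdsGT_zero ht]
  exact map_comap_of_surjective (mul_left_surjective₀ ht.ne') _

lemma diniQuot_smul (u : E) (t : ℝ) :
    diniQuot f x (t • u) = fun s => t * diniQuot f x u (t * s) := by
  funext s
  rcases eq_or_ne s 0 with rfl | hs
  · simp [diniQuot]
  rcases eq_or_ne t 0 with rfl | ht
  · simp [diniQuot]
  simp only [diniQuot, smul_smul, mul_comm s t]
  field_simp

lemma lowerDini_smul {u : E} (hfin : DiniFinite f x u) {t : ℝ} (ht : 0 < t) :
    lowerDini f x (t • u) = t * lowerDini f x u := by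
  let g := OrderIso.mulLeft₀ t ht
  have hbdd : IsBoundedUnder (· ≥ ·) (𝓝[>] (0 : ℝ)) (g ∘ diniQuot f x u) :=
    g.isBoundedUnder_ge_comp.2 hfin.2
  have hcobdd : IsCoboundedUnder (· ≥ ·) (𝓝[>] (0 : ℝ)) (g ∘ diniQuot f x u) :=
    (g.isBoundedUnder_le_comp.2 hfin.1).isCoboundedUnder_ge
  calc lowerDini f x (t • u)
      = liminf (fun r => t * diniQuot f x u r) (map (t * ·) (𝓝[>] 0)) := by
        rw [lowerDini, diniQuot_smul]
        exact liminf_comp (fun r => t * diniQuot f x u r) (t * ·) _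
    _ = t * lowerDini f x u := by
        rw [map_const_mul_nhdsGT_zero ht]
        exact (g.liminf_apply hfin.2 hfin.1.isCoboundedUnder_ge hbdd hcobdd).symm

lemma lowerDiniM_smul (hfin : ∀ u, DiniFinite f x u) (u : E) {t : ℝ} (ht : 0 ≤ t) :
    lowerDiniM f x (t • u) = t * lowerDiniM f x u := by
  rcases ht.eq_or_lt with rfl | ht
  · simp [lowerDiniM_zero]
  calc lowerDiniM f x (t • u)
      = ⨅ w, (lowerDini f x (t • u + t • w) - lowerDini f x (t • w)) :=
        ((MulAction.surjective₀ ht.ne').iInf_comp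
          fun w => lowerDini f x (t • u + w) - lowerDini f x w).symm
    _ = ⨅ w, t * (lowerDini f x (u + w) - lowerDini f x w) := by
        simp only [← smul_add, lowerDini_smul (hfin _) ht, mul_sub]
    _ = t * lowerDiniM f x u := (Real.mul_iInf_of_nonneg ht.le _).symm

theorem concaveOn_lowerDiniM (hfin : ∀ u, DiniFinite f x u) (hM : ∀ u, LowerDiniMFinite f x u) :
    ConcaveOn ℝ Set.univ (lowerDiniM f x) := by
  refine ⟨convex_univ, fun u _ v _ a b ha hb _ => ?_⟩
  rw [smul_eq_mul, smul_eq_mul, ← lowerDiniM_smul hfin u ha, ← lowerDiniM_smul hfin v hb]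
  exact lowerDiniM_add_le (hM _) (hM _)

lemma eventually_lt_of_lowerDiniM_pos {v : E} (hfin : DiniFinite f x v)
    (hM : LowerDiniMFinite f x v) (h : 0 < lowerDiniM f x v) :
    ∀ᶠ t in 𝓝[>] (0 : ℝ), f x < f (x + t • v) := by
  filter_upwards [eventually_lt_of_lt_liminf (h.trans_le (lowerDiniM_le_lowerDini hM)) hfin.2,
    self_mem_nhdsWithin] with t hquot (ht : 0 < t)
  simpa [diniQuot, div_pos_iff_of_pos_right ht] using hquot

end Dini

lemma tendsto_add_smul_nhdsGT_zero (x v : E) :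
    Tendsto (fun t : ℝ => x + t • v) (𝓝[>] 0) (𝓝 x) := by
  have : Tendsto (fun t : ℝ => x + t • v) (𝓝 0) (𝓝 (x + (0 : ℝ) • v)) :=
    (continuous_const.add (continuous_id.smul continuous_const)).tendsto 0
  rw [zero_smul, add_zero] at this
  exact this.mono_left nhdsWithin_le_nhds

theorem not_exists_lowerDiniM_pos_of_isMax {m : ℕ} {Ω : Set E} (hΩ : IsOpen Ω)
    {f : Fin (m + 1) → E → ℝ} {xh : E} (hx : xh ∈ Ω)
    (hfeas : ∀ i : Fin (m + 1), i ≠ 0 → 0 ≤ f i xh)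
    (hmax : ∀ x ∈ Ω, (∀ i : Fin (m + 1), i ≠ 0 → 0 ≤ f i x) → f 0 x ≤ f 0 xh)
    (hlsc : ∀ i : Fin (m + 1), i ≠ 0 → 0 < f i xh → LowerSemicontinuousAt (f i) xh)
    (hfin : ∀ i u, DiniFinite (f i) xh u) (hMfin : ∀ i u, LowerDiniMFinite (f i) xh u) :
    ¬ ∃ v : E, ∀ i : {i : Fin (m + 1) // i = 0 ∨ f i xh = 0}, 0 < lowerDiniM (f i) xh v := by
  rintro ⟨v, hv⟩
  have hincr : ∀ i, (i = 0 ∨ f i xh = 0) → ∀ᶠ t in 𝓝[>] (0 : ℝ), f i xh < f i (xh + t • v) :=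
    fun i hi => eventually_lt_of_lowerDiniM_pos (hfin i v) (hMfin i v) (hv ⟨i, hi⟩)
  have hobj := hincr 0 (Or.inl rfl)
  have hcons : ∀ᶠ t in 𝓝[>] (0 : ℝ), ∀ i : Fin (m + 1), i ≠ 0 → 0 ≤ f i (xh + t • v) := by
    refine eventually_all.2 fun i => ?_
    rcases eq_or_ne i 0 with rfl | hi
    · exact Eventually.of_forall fun _ h => absurd rfl h
    rcases (hfeas i hi).eq_or_lt with hact | hpos
    · filter_upwards [hincr i (Or.inr hact.symm)] with t ht _
      exact hact.trans_le ht.le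
    · filter_upwards [(tendsto_add_smul_nhdsGT_zero xh v).eventually
        (hlsc i hi hpos 0 hpos)] with t ht _
      exact ht.le
  have hΩ' := (tendsto_add_smul_nhdsGT_zero xh v).eventually (hΩ.mem_nhds hx)
  obtain ⟨t, hlt, hfeas_t, hmem⟩ := (hobj.and (hcons.and hΩ')).exists
  exact (hmax _ hmem hfeas_t).not_gt hlt

theorem kkt_dini_general (m : ℕ) (Ω : Set E) (hΩ : IsOpen Ω)
    (f : Fin (m + 1) → E → ℝ) (xh : E) (hx : xh ∈ Ω)
    (hfeas : ∀ i : Fin (m + 1), i ≠ 0 → 0 ≤ f i xh)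
    (hmax : ∀ x ∈ Ω, (∀ i : Fin (m + 1), i ≠ 0 → 0 ≤ f i x) → f 0 x ≤ f 0 xh)
    (hlsc : ∀ i : Fin (m + 1), i ≠ 0 → 0 < f i xh → LowerSemicontinuousAt (f i) xh)
    (hfin : ∀ i u, DiniFinite (f i) xh u)
    (hMfin : ∀ i u, LowerDiniMFinite (f i) xh u)
    (hslater : ∃ w : E, ∀ i : Fin (m + 1), i ≠ 0 → f i xh = 0 →
      0 < lowerDiniM (f i) xh w) :
    ∃ lam : Fin (m + 1) → ℝ,
      lam 0 = 1 ∧ (∀ i, 0 ≤ lam i) ∧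
      (∀ i : Fin (m + 1), i ≠ 0 → lam i * f i xh = 0) ∧
      ∀ u : E, ∑ i, lam i * lowerDiniM (f i) xh u ≤ 0 := by
  classical
  let active (i : Fin (m + 1)) : Prop := i = 0 ∨ f i xh = 0
  obtain ⟨w, hw⟩ := hslater
  have hslater_active : ∃ w, ∀ i : {i // active i}, i ≠ ⟨0, Or.inl rfl⟩ →
      0 < lowerDiniM (f i) xh w := by
    refine ⟨w, fun i hi => ?_⟩
    have hi0 : (i : Fin (m + 1)) ≠ 0 := fun h => hi (Subtype.ext h)
    exact hw i hi0 (i.2.resolve_left hi0)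
  obtain ⟨μ, hμ, hμ0, hsum⟩ :=
    exists_nonneg_sum_mul_nonpos_of_concaveOn_of_slater
      (φ := fun i : {i // active i} => lowerDiniM (f i) xh) ⟨0, Or.inl rfl⟩
      (fun i => concaveOn_lowerDiniM (hfin i) (hMfin i))
      (not_exists_lowerDiniM_pos_of_isMax hΩ hx hfeas hmax hlsc hfin hMfin) hslater_active
  refine ⟨fun i => if h : active i then μ ⟨i, h⟩ else 0, by simpa [active] using hμ0,
    fun i => ?_, fun i hi => ?_, fun u => ?_⟩
  · dsimp only
    split_ifs
    exacts [hμ _, le_rfl]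
  · by_cases h : f i xh = 0 <;> simp [active, hi, h]
  · rw [← Fintype.sum_subtype_add_sum_subtype active]
    have hactive : ∀ i : {i // active i}, (if h : active i then μ ⟨i, h⟩ else 0) = μ i :=
      fun i => dif_pos i.2
    have hinactive : ∀ i : {i // ¬ active i}, (if h : active i then μ ⟨i, h⟩ else 0) = 0 :=
      fun i => dif_neg i.2
    simpa [hactive, hinactive] using hsum u

/-- Karush–Kuhn–Tucker form: under the hypotheses of the
John-type theorem, if moreover there is a direction `w` with
`D⁻_M f_i(xh)(w) > 0` for every active constraint `i` (Slater-type condition),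
then the multipliers can be chosen with `lam 0 = 1`. -/
theorem kkt_dini (m : ℕ) (Ω : Set E) (hΩ : IsOpen Ω) (hΩne : Ω.Nonempty)
    (f : Fin (m + 1) → E → ℝ) (xh : E) (hx : xh ∈ Ω)
    (hfeas : ∀ i : Fin (m + 1), i ≠ 0 → 0 ≤ f i xh)
    (hmax : ∀ x ∈ Ω, (∀ i : Fin (m + 1), i ≠ 0 → 0 ≤ f i x) → f 0 x ≤ f 0 xh)
    (hlsc : ∀ i : Fin (m + 1), i ≠ 0 → 0 < f i xh → LowerSemicontinuousAt (f i) xh)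
    (hfin : ∀ i u, DiniFinite (f i) xh u)
    (hMfin : ∀ i u, LowerDiniMFinite (f i) xh u)
    (hslater : ∃ w : E, ∀ i : Fin (m + 1), i ≠ 0 → f i xh = 0 →
      0 < lowerDiniM (f i) xh w) :
    ∃ lam : Fin (m + 1) → ℝ,
      lam 0 = 1 ∧ (∀ i, 0 ≤ lam i) ∧
      (∀ i : Fin (m + 1), i ≠ 0 → lam i * f i xh = 0) ∧
      ∀ u : E, ∑ i, lam i * lowerDiniM (f i) xh u ≤ 0 :=
  kkt_dini_general m Ω hΩ f xh hx hfeas hmax hlsc hfin hMfin hslater
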